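/- Let E be a separable complex Hilbert space, A ∈ B(H²_E(𝕋)), and Φ₁ ∈ L∞_{B(E)}(𝕋) with T_z* A − A T_z = T_{Φ₁}. Then for every integer n ≥ 1, (T_z*)ⁿ A − A T_zⁿ = T_{((zⁿ − z̄ⁿ)/(z − z̄)) Φ₁}, where (zⁿ − z̄ⁿ)/(z − z̄) = z̄^{n−1}(1 + z² + ⋯ + z^{2(n−1)}) is a scalar-valued trigonometric polynomial. -/

import Mathlib

/-! `T_z* = T_{z̄}`; `T_{z̄} T_Φ = T_{z̄Φ}` because `M_{z̄}` maps `H²ᗮ` into itself, and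
`T_Φ T_z = T_{zΦ}` because `M_z` maps `H²` into itself. Induct on `n`, using
`T*ⁿ⁺¹A - ATⁿ⁺¹ = T*(T*ⁿA - ATⁿ) + (T*A - AT)Tⁿ` and the recursion `D_{n+1} = z̄ D_n + zⁿ` of
`D_n = ∑_{k<n} z^{2k-(n-1)} = (zⁿ - z̄ⁿ)/(z - z̄)`. -/

open MeasureTheory Complex AddCircle
open scoped ENNReal Real

set_option synthInstance.maxHeartbeats 1000000
set_option linter.unusedSectionVars false

noncomputable section

namespace PaperTHV

instance fact2pi : Fact (0 < 2 * Real.pi) := ⟨by positivity⟩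

/-- The circle, as `ℝ / 2πℤ`. -/
abbrev 𝕋c := AddCircle (2 * Real.pi)

/-- The normalized Lebesgue (Haar) measure on the circle. -/
abbrev μc : Measure 𝕋c := haarAddCircle

/-- The `n`-th Fourier coefficient of a vector-valued function on the circle
(a universe-polymorphic version of `fourierCoeff`). -/
def vFourierCoeff {F : Type*} [NormedAddCommGroup F] [NormedSpace ℂ F]
    (f : 𝕋c → F) (n : ℤ) : F :=
  ∫ t : 𝕋c, fourier (-n) t • f t ∂μc

variable (E : Type*) [NormedAddCommGroup E] [InnerProductSpace ℂ E] [CompleteSpace E]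
  [SecondCountableTopology E]

instance : IsBoundedSMul (E →L[ℂ] E) E :=
  IsBoundedSMul.of_norm_smul_le fun r x => r.le_opNorm x

/-- `L²_E(𝕋)`, the Bochner space of square integrable `E`-valued functions. -/
abbrev L2v := Lp E 2 μc

variable {E}

theorem integrable_fourier_smul (f : L2v E) (n : ℤ) :
    Integrable (fun t : 𝕋c => fourier n t • (f : 𝕋c → E) t) μc := by
  have h1 : MemLp (f : 𝕋c → E) 1 μc :=
    (Lp.memLp f).mono_exponent (by norm_num)
  have h2 : MemLp (fun t : 𝕋c => (fourier n t : ℂ)) ∞ μc :=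
    memLp_top_of_bound ((fourier n).continuous.aestronglyMeasurable) 1
      (Filter.Eventually.of_forall fun x => by
        simp only [fourier_apply, Circle.norm_coe, le_refl])
  have h3 : MemLp ((fun t : 𝕋c => (fourier n t : ℂ)) • (f : 𝕋c → E)) 1 μc := h1.smul h2
  rw [memLp_one_iff_integrable] at h3
  exact h3.congr (Filter.Eventually.of_forall fun x => rfl)

theorem vFourierCoeff_lp_add (f g : L2v E) (n : ℤ) :
    vFourierCoeff (⇑(f + g)) n = vFourierCoeff (⇑f) n + vFourierCoeff (⇑g) n := by
  unfold vFourierCoeff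
  rw [← integral_add (integrable_fourier_smul f (-n)) (integrable_fourier_smul g (-n))]
  apply integral_congr_ae
  filter_upwards [Lp.coeFn_add f g] with x hx
  rw [hx]
  simp only [Pi.add_apply, smul_add]

theorem vFourierCoeff_lp_smul (c : ℂ) (f : L2v E) (n : ℤ) :
    vFourierCoeff (⇑(c • f)) n = c • vFourierCoeff (⇑f) n := by
  unfold vFourierCoeff
  rw [← integral_smul]
  apply integral_congr_ae
  filter_upwards [Lp.coeFn_smul c f] with x hx
  rw [hx]
  simp only [Pi.smul_apply]
  rw [smul_comm]

theorem vFourierCoeff_lp_zero (n : ℤ) : vFourierCoeff (⇑(0 : L2v E)) n = 0 := by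
  unfold vFourierCoeff
  have h : (fun t : 𝕋c => fourier (-n) t • (⇑(0 : L2v E)) t) =ᵐ[μc] (fun _ => (0 : E)) := by
    filter_upwards [Lp.coeFn_zero E 2 μc] with x hx
    simp [hx]
  rw [integral_congr_ae h, integral_zero]

variable (E) in
/-- The `E`-valued Hardy space `H²_E(𝕋)`: members of `L²_E(𝕋)` all of whose Fourier
coefficients of negative index vanish. -/
def HardyV : Submodule ℂ (L2v E) where
  carrier := {f | ∀ n : ℤ, n < 0 → vFourierCoeff (⇑f) n = 0}
  add_mem' := by
    intro f g hf hg n hn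
    rw [vFourierCoeff_lp_add, hf n hn, hg n hn, add_zero]
  zero_mem' := fun n _ => vFourierCoeff_lp_zero n
  smul_mem' := by
    intro c f hf n hn
    rw [vFourierCoeff_lp_smul, hf n hn, smul_zero]

theorem norm_vFourierCoeff_le (f : L2v E) (n : ℤ) : ‖vFourierCoeff (⇑f) n‖ ≤ ‖f‖ := by
  unfold vFourierCoeff
  have h1 : ‖∫ t, fourier (-n) t • (⇑f) t ∂μc‖ ≤ ∫ t, ‖fourier (-n) t • (⇑f) t‖ ∂μc :=
    norm_integral_le_integral_norm _
  have h2 : (∫ t, ‖fourier (-n) t • (⇑f) t‖ ∂μc) = ∫ t, ‖(⇑f) t‖ ∂μc := by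
    apply integral_congr_ae
    apply Filter.Eventually.of_forall
    intro x
    simp only [norm_smul, fourier_apply, Circle.norm_coe, one_mul]
  refine h1.trans (h2.le.trans ?_)
  have h3 : (∫ t, ‖(⇑f) t‖ ∂μc) = (eLpNorm (⇑f) 1 μc).toReal := by
    rw [integral_norm_eq_lintegral_enorm (Lp.aestronglyMeasurable f),
      eLpNorm_one_eq_lintegral_enorm]
  rw [h3, Lp.norm_def]
  apply ENNReal.toReal_mono (Lp.eLpNorm_ne_top f)
  exact eLpNorm_le_eLpNorm_of_exponent_le (by norm_num) (Lp.aestronglyMeasurable f)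

theorem continuous_fourierCoeff (n : ℤ) :
    Continuous fun f : L2v E => vFourierCoeff (⇑f) n := by
  have hL : LipschitzWith 1 (fun f : L2v E => vFourierCoeff (⇑f) n) := by
    apply LipschitzWith.of_dist_le_mul
    intro f g
    rw [dist_eq_norm, dist_eq_norm]
    have hsub : vFourierCoeff (⇑(f - g)) n = vFourierCoeff (⇑f) n - vFourierCoeff (⇑g) n := by
      have h1 : f - g = f + (-1 : ℂ) • g := by rw [neg_one_smul, sub_eq_add_neg]
      rw [h1, vFourierCoeff_lp_add, vFourierCoeff_lp_smul, neg_one_smul, sub_eq_add_neg]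
    rw [← hsub]
    simpa using norm_vFourierCoeff_le (f - g) n
  exact hL.continuous

theorem isClosed_HardyV : IsClosed ((HardyV E : Submodule ℂ (L2v E)) : Set (L2v E)) := by
  have h : ((HardyV E : Submodule ℂ (L2v E)) : Set (L2v E)) =
      ⋂ (n : ℤ) (_ : n < 0), ((fun f : L2v E => vFourierCoeff (⇑f) n) ⁻¹' {0}) := by
    ext f
    simp only [Set.mem_iInter, Set.mem_preimage, Set.mem_singleton_iff, SetLike.mem_coe]
    exact ⟨fun hf n hn => hf n hn, fun hf n hn => hf n hn⟩
  rw [h]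
  exact isClosed_iInter fun n => isClosed_iInter fun _ =>
    isClosed_singleton.preimage (continuous_fourierCoeff n)

instance : CompleteSpace (HardyV E) := (isClosed_HardyV (E := E)).completeSpace_coe

/-- Underlying function of the multiplication operator with operator-valued symbol. -/
def MopFunV (Φ : 𝕋c → (E →L[ℂ] E)) (hΦ : MemLp Φ ∞ μc) (f : L2v E) : L2v E :=
  ((Lp.memLp f).smul hΦ).toLp (Φ • ⇑f)

theorem MopFunV_coeFn (Φ : 𝕋c → (E →L[ℂ] E)) (hΦ : MemLp Φ ∞ μc) (f : L2v E) :
    ⇑(MopFunV Φ hΦ f) =ᵐ[μc] Φ • ⇑f := MemLp.coeFn_toLp _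

theorem MopFunV_add (Φ : 𝕋c → (E →L[ℂ] E)) (hΦ : MemLp Φ ∞ μc) (f g : L2v E) :
    MopFunV Φ hΦ (f + g) = MopFunV Φ hΦ f + MopFunV Φ hΦ g := by
  apply Lp.ext
  filter_upwards [MopFunV_coeFn Φ hΦ (f + g), MopFunV_coeFn Φ hΦ f, MopFunV_coeFn Φ hΦ g,
    Lp.coeFn_add f g, Lp.coeFn_add (MopFunV Φ hΦ f) (MopFunV Φ hΦ g)] with x h1 h2 h3 h4 h5
  simp only [h1, h5, Pi.add_apply, h2, h3, Pi.smul_apply', h4, smul_add]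

theorem MopFunV_smul (Φ : 𝕋c → (E →L[ℂ] E)) (hΦ : MemLp Φ ∞ μc) (c : ℂ) (f : L2v E) :
    MopFunV Φ hΦ (c • f) = c • MopFunV Φ hΦ f := by
  apply Lp.ext
  filter_upwards [MopFunV_coeFn Φ hΦ (c • f), MopFunV_coeFn Φ hΦ f,
    Lp.coeFn_smul c f, Lp.coeFn_smul c (MopFunV Φ hΦ f)] with x h1 h2 h3 h4
  simp only [h1, h4, Pi.smul_apply', Pi.smul_apply, h2, h3]
  rw [smul_comm]

theorem MopFunV_norm (Φ : 𝕋c → (E →L[ℂ] E)) (hΦ : MemLp Φ ∞ μc) (f : L2v E) :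
    ‖MopFunV Φ hΦ f‖ ≤ (eLpNorm Φ ∞ μc).toReal * ‖f‖ := by
  have hrfl : MopFunV Φ hΦ f = ((Lp.memLp f).smul hΦ).toLp (Φ • ⇑f) := rfl
  rw [hrfl, Lp.norm_toLp (Φ • ⇑f) ((Lp.memLp f).smul hΦ), Lp.norm_def]
  have hb : eLpNorm (Φ • ⇑f) 2 μc ≤ eLpNorm Φ ∞ μc * eLpNorm (⇑f) 2 μc :=
    eLpNorm_smul_le_eLpNorm_top_mul_eLpNorm 2 (Lp.aestronglyMeasurable f) Φ
  have hfin : eLpNorm Φ ∞ μc * eLpNorm (⇑f) 2 μc ≠ ∞ :=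
    ENNReal.mul_ne_top hΦ.eLpNorm_ne_top (Lp.eLpNorm_ne_top f)
  calc (eLpNorm (Φ • ⇑f) 2 μc).toReal
      ≤ (eLpNorm Φ ∞ μc * eLpNorm (⇑f) 2 μc).toReal := ENNReal.toReal_mono hfin hb
    _ = (eLpNorm Φ ∞ μc).toReal * (eLpNorm (⇑f) 2 μc).toReal := ENNReal.toReal_mul

/-- The multiplication (Laurent) operator `M_Φ` on `L²_E(𝕋)` with operator-valued symbol
`Φ ∈ L∞_{B(E)}(𝕋)`. -/
def MopV (Φ : 𝕋c → (E →L[ℂ] E)) (hΦ : MemLp Φ ∞ μc) : L2v E →L[ℂ] L2v E :=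
  LinearMap.mkContinuous
    { toFun := MopFunV Φ hΦ
      map_add' := MopFunV_add Φ hΦ
      map_smul' := MopFunV_smul Φ hΦ }
    (eLpNorm Φ ∞ μc).toReal
    (fun f => MopFunV_norm Φ hΦ f)

/-- The conjugation operator `J : L²_E(𝕋) → L²_E(𝕋)`, `(Jf)(z) = f(z̄)`. -/
def JopV : L2v E →L[ℂ] L2v E :=
  LinearMap.mkContinuous
    { toFun := fun f =>
        Lp.compMeasurePreserving (fun x : 𝕋c => -x) (Measure.measurePreserving_neg μc) f
      map_add' := by
        intro f g
        exact map_add (Lp.compMeasurePreserving _ (Measure.measurePreserving_neg μc)) f g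
      map_smul' := by
        intro c f
        apply Lp.ext
        simp only [RingHom.id_apply]
        have hmp := Measure.measurePreserving_neg (μ := μc)
        have h1 := Lp.coeFn_compMeasurePreserving (μ := μc) (c • f) hmp
        have h2 := Lp.coeFn_compMeasurePreserving (μ := μc) f hmp
        have h3 : ⇑(c • f) ∘ (fun x : 𝕋c => -x) =ᵐ[μc] (c • ⇑f) ∘ (fun x : 𝕋c => -x) :=
          hmp.quasiMeasurePreserving.ae_eq_comp (Lp.coeFn_smul c f)
        have h4 : (c • ⇑f) ∘ (fun x : 𝕋c => -x) = c • (⇑f ∘ fun x : 𝕋c => -x) := rfl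
        have h5 : c • (⇑f ∘ fun x : 𝕋c => -x) =ᵐ[μc]
            c • ⇑(Lp.compMeasurePreserving (fun x : 𝕋c => -x) hmp f) :=
          h2.symm.const_smul c
        exact ((h1.trans h3).trans ((h4 ▸ h5 : _))).trans (Lp.coeFn_smul c _).symm }
    1
    (by
      intro f
      simp only [LinearMap.coe_mk, AddHom.coe_mk, one_mul]
      exact le_of_eq (Lp.norm_compMeasurePreserving f _))

/-- The Toeplitz operator `T_Φ = P_{H²_E} M_Φ |_{H²_E}`. -/
def ToepV (Φ : 𝕋c → (E →L[ℂ] E)) (hΦ : MemLp Φ ∞ μc) : HardyV E →L[ℂ] HardyV E :=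
  (HardyV E).orthogonalProjectionOnto.comp ((MopV Φ hΦ).comp (HardyV E).subtypeL)

/-- The Hankel operator `H_Φ = P_{H²_E} M_Φ J |_{H²_E}`. -/
def HankV (Φ : 𝕋c → (E →L[ℂ] E)) (hΦ : MemLp Φ ∞ μc) : HardyV E →L[ℂ] HardyV E :=
  (HardyV E).orthogonalProjectionOnto.comp ((MopV Φ hΦ).comp (JopV.comp (HardyV E).subtypeL))

variable (E) in
/-- The symbol `z ⬝ I_E`. -/
def zSym : 𝕋c → (E →L[ℂ] E) := fun x => (fourier 1 x : ℂ) • (1 : E →L[ℂ] E)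

theorem zSym_memℒp : MemLp (zSym E) ∞ μc := by
  have hc : Continuous (zSym E) := by
    have h1 : Continuous fun x : 𝕋c => (fourier 1 x : ℂ) := (fourier 1).continuous
    exact h1.smul continuous_const
  refine memLp_top_of_bound hc.aestronglyMeasurable 1
    (Filter.Eventually.of_forall fun x => ?_)
  rw [zSym, norm_smul]
  simp only [fourier_apply, Circle.norm_coe, one_mul]
  exact ContinuousLinearMap.norm_id_le

variable (E) in
/-- The (vector-valued) unilateral shift `T_z`. -/
def TzV : HardyV E →L[ℂ] HardyV E := ToepV (zSym E) zSym_memℒp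

variable (E) in
/-- `T_z^*`, the adjoint of the unilateral shift. -/
def TzStarV : HardyV E →L[ℂ] HardyV E := ContinuousLinearMap.adjoint (TzV E)

variable (E) in
/-- `A` is a Toeplitz + Hankel operator: `A = T_Φ + H_Ψ` for some
`Φ, Ψ ∈ L∞_{B(E)}(𝕋)`. -/
def IsToepPlusHankV (A : HardyV E →L[ℂ] HardyV E) : Prop :=
  ∃ (Φ Ψ : 𝕋c → (E →L[ℂ] E)) (hΦ : MemLp Φ ∞ μc) (hΨ : MemLp Ψ ∞ μc),
    A = ToepV Φ hΦ + HankV Ψ hΨ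


theorem dirichlet_smul_memℒp (n : ℕ) {Φ : 𝕋c → (E →L[ℂ] E)} (hΦ : MemLp Φ ∞ μc) :
    MemLp (fun x : 𝕋c =>
      (∑ k ∈ Finset.range n, (fourier (2 * (k : ℤ) - ((n : ℤ) - 1)) x : ℂ)) • Φ x) ∞ μc := by
  have hc : Continuous fun x : 𝕋c =>
      (∑ k ∈ Finset.range n, (fourier (2 * (k : ℤ) - ((n : ℤ) - 1)) x : ℂ)) :=
    continuous_finset_sum _ fun k _ => (fourier _).continuous
  have hb : MemLp (fun x : 𝕋c =>
      (∑ k ∈ Finset.range n, (fourier (2 * (k : ℤ) - ((n : ℤ) - 1)) x : ℂ))) ∞ μc := by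
    refine memLp_top_of_bound hc.aestronglyMeasurable n
      (Filter.Eventually.of_forall fun x => ?_)
    calc ‖∑ k ∈ Finset.range n, (fourier (2 * (k : ℤ) - ((n : ℤ) - 1)) x : ℂ)‖
        ≤ ∑ k ∈ Finset.range n, ‖(fourier (2 * (k : ℤ) - ((n : ℤ) - 1)) x : ℂ)‖ :=
          norm_sum_le _ _
      _ = n := by
          rw [Finset.sum_congr rfl fun k _ => ?_, Finset.sum_const, Finset.card_range,
            nsmul_eq_mul, mul_one]
          simp only [fourier_apply, Circle.norm_coe]
  have h2 : MemLp ((fun x : 𝕋c =>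
        (∑ k ∈ Finset.range n, (fourier (2 * (k : ℤ) - ((n : ℤ) - 1)) x : ℂ))) • Φ) ∞ μc :=
    hΦ.smul hb
  have h3 : ((fun x : 𝕋c =>
        (∑ k ∈ Finset.range n, (fourier (2 * (k : ℤ) - ((n : ℤ) - 1)) x : ℂ))) • Φ) =
      fun x : 𝕋c =>
        (∑ k ∈ Finset.range n, (fourier (2 * (k : ℤ) - ((n : ℤ) - 1)) x : ℂ)) • Φ x := by
    funext x
    simp only [Pi.smul_apply']
  exact h3 ▸ h2

theorem memLp_fourier_smul {F : Type*} [NormedAddCommGroup F] [NormedSpace ℂ F] (m : ℤ)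
    {Φ : 𝕋c → F} (hΦ : MemLp Φ ∞ μc) :
    MemLp (fun x : 𝕋c => (fourier m x : ℂ) • Φ x) ∞ μc :=
  hΦ.smul (memLp_top_of_bound (fourier m).continuous.aestronglyMeasurable 1
    (.of_forall fun x => by rw [fourier_apply, Circle.norm_coe]))

variable (E) in
def fourierSym (m : ℤ) : 𝕋c → (E →L[ℂ] E) := fun x => (fourier m x : ℂ) • 1

theorem memLp_fourierSym (m : ℤ) : MemLp (fourierSym E m) ∞ μc :=
  memLp_fourier_smul m (memLp_const 1)

theorem TzV_eq_ToepV_fourierSym : TzV E = ToepV (fourierSym E 1) (memLp_fourierSym 1) := rfl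

theorem vFourierCoeff_fourier_smul {F : Type*} [NormedAddCommGroup F] [NormedSpace ℂ F]
    (m : ℤ) (f : 𝕋c → F) (n : ℤ) :
    vFourierCoeff (fun x => (fourier m x : ℂ) • f x) n = vFourierCoeff f (n - m) := by
  unfold vFourierCoeff
  congr 1 with x
  rw [smul_smul, ← fourier_add, neg_sub, sub_eq_neg_add]

theorem vFourierCoeff_congr_ae {F : Type*} [NormedAddCommGroup F] [NormedSpace ℂ F]
    {f g : 𝕋c → F} (h : f =ᵐ[μc] g) (n : ℤ) : vFourierCoeff f n = vFourierCoeff g n :=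
  integral_congr_ae (h.mono fun x hx => by simp only [hx])

section

variable {Φ Ψ : 𝕋c → (E →L[ℂ] E)}

theorem MopV_ae_eq (hΦ : MemLp Φ ∞ μc) (f : L2v E) :
    ⇑(MopV Φ hΦ f) =ᵐ[μc] fun x => Φ x (f x) :=
  MopFunV_coeFn Φ hΦ f

theorem MopV_fourierSym_ae_eq (m : ℤ) (f : L2v E) :
    ⇑(MopV (fourierSym E m) (memLp_fourierSym m) f) =ᵐ[μc]
      fun x => (fourier m x : ℂ) • f x := by
  filter_upwards [MopV_ae_eq (memLp_fourierSym m) f] with x hx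
  simp [hx, fourierSym]

theorem MopV_MopV_fourierSym (hΦ : MemLp Φ ∞ μc) (m : ℤ) (f : L2v E) :
    MopV Φ hΦ (MopV (fourierSym E m) (memLp_fourierSym m) f) =
      MopV (fun x => (fourier m x : ℂ) • Φ x) (memLp_fourier_smul m hΦ) f := by
  apply Lp.ext
  filter_upwards [MopV_ae_eq hΦ (MopV (fourierSym E m) (memLp_fourierSym m) f),
    MopV_fourierSym_ae_eq m f, MopV_ae_eq (memLp_fourier_smul m hΦ) f] with x h₁ h₂ h₃
  rw [h₁, h₂, h₃, map_smul, smul_apply]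

theorem MopV_fourierSym_MopV (hΦ : MemLp Φ ∞ μc) (m : ℤ) (f : L2v E) :
    MopV (fourierSym E m) (memLp_fourierSym m) (MopV Φ hΦ f) =
      MopV (fun x => (fourier m x : ℂ) • Φ x) (memLp_fourier_smul m hΦ) f := by
  apply Lp.ext
  filter_upwards [MopV_fourierSym_ae_eq m (MopV Φ hΦ f), MopV_ae_eq hΦ f,
    MopV_ae_eq (memLp_fourier_smul m hΦ) f] with x h₁ h₂ h₃
  rw [h₁, h₂, h₃, smul_apply]

theorem MopV_fourierSym_mem_HardyV {m : ℤ} (hm : 0 ≤ m) {f : L2v E} (hf : f ∈ HardyV E) :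
    MopV (fourierSym E m) (memLp_fourierSym m) f ∈ HardyV E := by
  intro n hn
  rw [vFourierCoeff_congr_ae (MopV_fourierSym_ae_eq m f), vFourierCoeff_fourier_smul]
  exact hf (n - m) (by omega)

theorem inner_MopV_fourierSym_neg (m : ℤ) (f g : L2v E) :
    inner ℂ (MopV (fourierSym E (-m)) (memLp_fourierSym (-m)) f) g =
      inner ℂ f (MopV (fourierSym E m) (memLp_fourierSym m) g) := by
  rw [L2.inner_def, L2.inner_def]
  apply integral_congr_ae
  filter_upwards [MopV_fourierSym_ae_eq (-m) f, MopV_fourierSym_ae_eq m g] with x hf hg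
  rw [hf, hg, inner_smul_left, inner_smul_right, fourier_neg, Complex.conj_conj]

theorem MopV_fourierSym_mem_orthogonal {m : ℤ} (hm : m ≤ 0) {f : L2v E}
    (hf : f ∈ (HardyV E)ᗮ) : MopV (fourierSym E m) (memLp_fourierSym m) f ∈ (HardyV E)ᗮ := by
  rw [Submodule.mem_orthogonal']
  intro g hg
  rw [← neg_neg m, inner_MopV_fourierSym_neg]
  exact Submodule.inner_left_of_mem_orthogonal (MopV_fourierSym_mem_HardyV (by omega) hg) hf

theorem ToepV_congr (hΦ : MemLp Φ ∞ μc) (hΨ : MemLp Ψ ∞ μc)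
    (h : Φ = Ψ) : ToepV Φ hΦ = ToepV Ψ hΨ := by
  subst h; rfl

theorem ToepV_apply (hΦ : MemLp Φ ∞ μc) (f : HardyV E) :
    ToepV Φ hΦ f = (HardyV E).orthogonalProjectionOnto (MopV Φ hΦ f) := rfl

theorem ToepV_add (hΦ : MemLp Φ ∞ μc) (hΨ : MemLp Ψ ∞ μc) :
    ToepV (Φ + Ψ) (hΦ.add hΨ) = ToepV Φ hΦ + ToepV Ψ hΨ := by
  ext1 f
  have hM : MopV (Φ + Ψ) (hΦ.add hΨ) f = MopV Φ hΦ f + MopV Ψ hΨ f := by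
    apply Lp.ext
    filter_upwards [MopV_ae_eq (hΦ.add hΨ) f, MopV_ae_eq hΦ f, MopV_ae_eq hΨ f,
      Lp.coeFn_add (MopV Φ hΦ f) (MopV Ψ hΨ f)] with x h₁ h₂ h₃ h₄
    rw [h₁, h₄, Pi.add_apply, Pi.add_apply, h₂, h₃, add_apply]
  rw [add_apply, ToepV_apply, ToepV_apply, ToepV_apply, hM, map_add]

theorem ToepV_comp_ToepV_fourierSym (hΦ : MemLp Φ ∞ μc) {m : ℤ} (hm : 0 ≤ m) :
    (ToepV Φ hΦ).comp (ToepV (fourierSym E m) (memLp_fourierSym m)) =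
      ToepV (fun x => (fourier m x : ℂ) • Φ x) (memLp_fourier_smul m hΦ) := by
  ext1 f
  have hzf := (HardyV E).orthogonalProjectionOnto_mem_subspace_eq_self
    ⟨_, MopV_fourierSym_mem_HardyV hm f.2⟩
  rw [ContinuousLinearMap.comp_apply, ToepV_apply, ToepV_apply, ToepV_apply, hzf,
    MopV_MopV_fourierSym]

theorem ToepV_fourierSym_comp_ToepV {m : ℤ} (hm : m ≤ 0) {Φ : 𝕋c → (E →L[ℂ] E)}
    (hΦ : MemLp Φ ∞ μc) :
    (ToepV (fourierSym E m) (memLp_fourierSym m)).comp (ToepV Φ hΦ) =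
      ToepV (fun x => (fourier m x : ℂ) • Φ x) (memLp_fourier_smul m hΦ) := by
  ext1 f
  set g := MopV Φ hΦ f
  have hg : g - (HardyV E).starProjection g ∈ (HardyV E)ᗮ :=
    (HardyV E).sub_starProjection_mem_orthogonal g
  have hproj : ((HardyV E).orthogonalProjectionOnto g : L2v E) =
      g - (g - (HardyV E).starProjection g) := by
    rw [sub_sub_cancel, Submodule.starProjection_apply]
  rw [ContinuousLinearMap.comp_apply, ToepV_apply, ToepV_apply, ToepV_apply, hproj, map_sub,
    map_sub, Submodule.orthogonalProjectionOnto_apply_of_mem_orthogonal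
      (MopV_fourierSym_mem_orthogonal hm hg), sub_zero, MopV_fourierSym_MopV]

theorem ToepV_fourierSym_adjoint (m : ℤ) :
    (ToepV (fourierSym E m) (memLp_fourierSym m)).adjoint =
      ToepV (fourierSym E (-m)) (memLp_fourierSym (-m)) := by
  refine ((ContinuousLinearMap.eq_adjoint_iff _ _).mpr fun f g => ?_).symm
  calc inner ℂ (ToepV (fourierSym E (-m)) (memLp_fourierSym (-m)) f) g
      = inner ℂ (MopV (fourierSym E (-m)) (memLp_fourierSym (-m)) f) (g : L2v E) :=
        Submodule.inner_orthogonalProjectionOnto_eq_of_mem_right g _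
    _ = inner ℂ (f : L2v E) (MopV (fourierSym E m) (memLp_fourierSym m) g) :=
        inner_MopV_fourierSym_neg m (f : L2v E) (g : L2v E)
    _ = inner ℂ f (ToepV (fourierSym E m) (memLp_fourierSym m) g) :=
        (Submodule.inner_orthogonalProjectionOnto_eq_of_mem_left f _).symm

theorem TzStarV_eq_ToepV : TzStarV E = ToepV (fourierSym E (-1)) (memLp_fourierSym (-1)) := by
  rw [TzStarV, TzV_eq_ToepV_fourierSym, ToepV_fourierSym_adjoint]

theorem ToepV_comp_TzV_pow (hΦ : MemLp Φ ∞ μc) (m : ℕ) :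
    (ToepV Φ hΦ).comp (TzV E ^ m) =
      ToepV (fun x => (fourier m x : ℂ) • Φ x) (memLp_fourier_smul m hΦ) := by
  induction m with
  | zero => exact ToepV_congr _ _ (by simp)
  | succ m ih =>
    rw [pow_succ, ContinuousLinearMap.mul_def, ← ContinuousLinearMap.comp_assoc, ih,
      TzV_eq_ToepV_fourierSym]
    refine (ToepV_comp_ToepV_fourierSym _ zero_le_one).trans (ToepV_congr _ _ ?_)
    ext1 x
    rw [smul_smul, ← fourier_add]
    congr 3
    push_cast
    ring

end

theorem pow_succ_mul_sub_mul_pow_succ {R : Type*} [Ring R] (a b x : R) (n : ℕ) :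
    a ^ (n + 1) * x - x * b ^ (n + 1) =
      a * (a ^ n * x - x * b ^ n) + (a * x - x * b) * b ^ n := by
  rw [pow_succ', pow_succ' b]
  noncomm_ring

theorem sum_fourier_two_mul_sub_succ {T : ℝ} [Fact (0 < T)] (n : ℕ) (x : AddCircle T) :
    ∑ k ∈ Finset.range (n + 1), (fourier (2 * (k : ℤ) - (((n + 1 : ℕ) : ℤ) - 1)) x : ℂ) =
      fourier (-1) x * ∑ k ∈ Finset.range n, (fourier (2 * (k : ℤ) - ((n : ℤ) - 1)) x : ℂ) +
        fourier n x := by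
  rw [Finset.sum_range_succ, Finset.mul_sum]
  congr 1
  · refine Finset.sum_congr rfl fun k _ => ?_
    rw [← fourier_add]
    congr 2
    push_cast
    ring
  · congr 2
    push_cast
    ring

theorem iterated_toeplitz_identity (A : HardyV E →L[ℂ] HardyV E)
    (Φ₁ : 𝕋c → (E →L[ℂ] E)) (hΦ₁ : MemLp Φ₁ ∞ μc)
    (h : (TzStarV E).comp A - A.comp (TzV E) = ToepV Φ₁ hΦ₁) :
    ∀ n : ℕ, 1 ≤ n →
      ((TzStarV E) ^ n).comp A - A.comp ((TzV E) ^ n) =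
        ToepV (fun x : 𝕋c =>
            (∑ k ∈ Finset.range n, (fourier (2 * (k : ℤ) - ((n : ℤ) - 1)) x : ℂ)) • Φ₁ x)
          (dirichlet_smul_memℒp n hΦ₁) := by
  intro n hn
  induction n, hn using Nat.le_induction with
  | base =>
    rw [pow_one, pow_one, h]
    exact ToepV_congr _ _ (by simp)
  | succ n _ ih =>
    simp only [← ContinuousLinearMap.mul_def] at h ih ⊢
    rw [pow_succ_mul_sub_mul_pow_succ, ih, h]
    simp only [ContinuousLinearMap.mul_def]
    rw [TzStarV_eq_ToepV, ToepV_fourierSym_comp_ToepV (by norm_num), ToepV_comp_TzV_pow,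
      ← ToepV_add]
    refine ToepV_congr _ _ (funext fun x => ?_)
    rw [sum_fourier_two_mul_sub_succ, add_smul, mul_smul]
    rfl

end PaperTHV
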